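/- arXiv:1606.07118 — 4 statements merged into one kernel-verified Lean document; each statement's English description precedes it below -/
import Mathlib

section
/- For every integer n ≥ 1, ∫_{0 ≤ s₁ ≤ s₂ ≤ ⋯ ≤ sₙ ≤ 1} ds₁⋯dsₙ / √(s₁(s₂−s₁)⋯(sₙ−s_{n−1})) = π^{n/2} / Γ(n/2 + 1). -/
open MeasureTheory Set

/-!
The substitution `sᵢ = x₁² + ⋯ + xᵢ²` maps the part of the open Euclidean unit ball lying in the
positive orthant bijectively onto the open ordered simplex. Its Jacobian is `∏ 2 xᵢ`, while the
gaps become `xᵢ²`, so the integrand turns into `∏ xᵢ⁻¹` and the integral equals `2ⁿ` times the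
volume of that part of the ball. By the sign symmetries of the ball this is the volume of the whole
unit ball, `π^{n/2} / Γ(n/2 + 1)`. The closed simplex differs from the open one by a null set
(ties `sᵢ = sⱼ` and faces `sᵢ ∈ {0, 1}`).
-/

namespace OrderedSimplex

variable {n : ℕ}

section Gaps

variable {M : Type*} [AddCommGroup M]

def gap (s : Fin n → M) (i : Fin n) : M :=
  s i - if (i : ℕ) = 0 then 0 else s ⟨(i : ℕ) - 1, lt_of_le_of_lt (Nat.sub_le _ _) i.isLt⟩

def partialSum (f : Fin n → M) (i : Fin n) : M := ∑ j ∈ Finset.Iic i, f j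

lemma gap_of_val_eq_zero (s : Fin n → M) {i : Fin n} (hi : (i : ℕ) = 0) : gap s i = s i := by
  simp [gap, hi]

lemma gap_of_val_eq_succ (s : Fin n → M) {i : Fin n} {k : ℕ} (hk : (i : ℕ) = k + 1) :
    gap s i = s i - s ⟨k, by omega⟩ := by
  simp only [gap, hk, Nat.add_one_ne_zero, if_false, Nat.add_sub_cancel]

lemma partialSum_of_val_eq_zero (f : Fin n → M) {i : Fin n} (hi : (i : ℕ) = 0) :
    partialSum f i = f i := by
  have : Finset.Iic i = {i} := by
    ext j
    simp only [Finset.mem_Iic, Finset.mem_singleton, Fin.le_def, Fin.ext_iff]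
    omega
  simp [partialSum, this]

lemma partialSum_of_val_eq_succ (f : Fin n → M) {i : Fin n} {k : ℕ} (hk : (i : ℕ) = k + 1) :
    partialSum f i = partialSum f ⟨k, by omega⟩ + f i := by
  have : Finset.Iic i = insert i (Finset.Iic ⟨k, by omega⟩) := by
    ext j
    simp only [Finset.mem_Iic, Finset.mem_insert, Fin.le_def, Fin.ext_iff]
    omega
  rw [partialSum, this, Finset.sum_insert (by simp [Fin.le_def]; omega), add_comm]
  rfl

@[simp]
lemma gap_partialSum (f : Fin n → M) : gap (partialSum f) = f := by
  funext i
  obtain ⟨_ | k, hi⟩ := i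
  · rw [gap_of_val_eq_zero _ rfl, partialSum_of_val_eq_zero _ rfl]
  · rw [gap_of_val_eq_succ _ rfl, partialSum_of_val_eq_succ _ rfl, add_sub_cancel_left]

@[simp]
lemma partialSum_gap (s : Fin n → M) : partialSum (gap s) = s := by
  funext ⟨k, hk⟩
  induction k with
  | zero => rw [partialSum_of_val_eq_zero _ rfl, gap_of_val_eq_zero _ rfl]
  | succ k ih =>
    rw [partialSum_of_val_eq_succ _ rfl, gap_of_val_eq_succ _ rfl, ih, add_sub_cancel]

end Gaps

lemma strictMono_partialSum {f : Fin n → ℝ} (hf : ∀ i, 0 < f i) : StrictMono (partialSum f) :=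
  fun i j hij => Finset.sum_lt_sum_of_subset (Finset.Iic_subset_Iic.mpr hij.le)
    (Finset.mem_Iic.mpr le_rfl) (by simpa using hij) (hf j) fun k _ _ => (hf k).le

def simplex (n : ℕ) : Set (Fin n → ℝ) :=
  {s | Monotone s ∧ (∀ i, 0 ≤ s i) ∧ (∀ i, s i ≤ 1)}

def openSimplex (n : ℕ) : Set (Fin n → ℝ) :=
  {s | StrictMono s ∧ (∀ i, 0 < s i) ∧ (∀ i, s i < 1)}

def euclideanUnitBall (n : ℕ) : Set (Fin n → ℝ) := {x | ∑ i, x i ^ 2 < 1}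

def cumSumSq (x : Fin n → ℝ) : Fin n → ℝ := partialSum (x ^ 2)

lemma gap_pos {s : Fin n → ℝ} (hs : StrictMono s) (hpos : ∀ i, 0 < s i) (i : Fin n) :
    0 < gap s i := by
  obtain ⟨_ | k, hk⟩ := i
  · rw [gap_of_val_eq_zero _ rfl]
    exact hpos _
  · rw [gap_of_val_eq_succ _ rfl, sub_pos]
    exact hs (Fin.mk_lt_mk.2 k.lt_succ_self)

lemma injOn_cumSumSq : InjOn (cumSumSq (n := n)) (univ.pi fun _ => Ici 0) := by
  intro x hx y hy hxy
  funext i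
  have hsq : x i ^ 2 = y i ^ 2 := by simpa [cumSumSq] using congrFun (congrArg gap hxy) i
  exact (pow_left_inj₀ (hx i trivial) (hy i trivial) two_ne_zero).1 hsq

lemma cumSumSq_image :
    cumSumSq '' (univ.pi (fun _ => Ioi 0) ∩ euclideanUnitBall n) = openSimplex n := by
  ext s
  constructor
  · rintro ⟨x, ⟨hx, hball⟩, rfl⟩
    have hsq : ∀ i, 0 < (x ^ 2) i := fun i => pow_pos (hx i trivial) 2
    refine ⟨strictMono_partialSum hsq,
      fun i => Finset.sum_pos (fun j _ => hsq j) ⟨i, Finset.mem_Iic.2 le_rfl⟩, fun i => ?_⟩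
    exact (Finset.sum_le_sum_of_subset_of_nonneg (Finset.subset_univ _)
      fun j _ _ => (hsq j).le).trans_lt hball
  · rintro ⟨hs, hpos, hlt⟩
    have hsq : (fun i => √(gap s i)) ^ 2 = gap s :=
      funext fun i => Real.sq_sqrt (gap_pos hs hpos i).le
    refine ⟨fun i => √(gap s i), ⟨fun i _ => Real.sqrt_pos.2 (gap_pos hs hpos i), ?_⟩, ?_⟩
    · change ∑ i, ((fun i => √(gap s i)) ^ 2) i < 1
      rw [hsq]
      obtain _ | k := n
      · simp
      · rw [← Finset.Iic_top]
        exact (congrFun (partialSum_gap s) ⊤).trans_lt (hlt ⊤)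
    · rw [cumSumSq, hsq, partialSum_gap]

def cumSumSqDeriv (x : Fin n → ℝ) : (Fin n → ℝ) →L[ℝ] Fin n → ℝ :=
  ContinuousLinearMap.pi fun i => ∑ j ∈ Finset.Iic i, (2 * x j) • ContinuousLinearMap.proj j

lemma hasFDerivAt_cumSumSq (x : Fin n → ℝ) : HasFDerivAt cumSumSq (cumSumSqDeriv x) x := by
  refine hasFDerivAt_pi'' fun i => (HasFDerivAt.fun_sum fun j _ =>
    (hasFDerivAt_apply (𝕜 := ℝ) j x).pow 2).congr_fderiv ?_
  ext v
  simp [cumSumSqDeriv]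

lemma det_cumSumSqDeriv (x : Fin n → ℝ) : (cumSumSqDeriv x).det = ∏ i, 2 * x i := by
  rw [ContinuousLinearMap.det, ← LinearMap.det_toMatrix', Matrix.det_of_isLowerTriangular]
  · simp [cumSumSqDeriv, LinearMap.toMatrix'_apply, Pi.single_apply]
  · intro i j hij
    have hji : ¬ j ≤ i := not_le.2 hij
    simp [cumSumSqDeriv, LinearMap.toMatrix'_apply, Pi.single_apply, hji]

def signFlip (ε : Fin n → Bool) (x : Fin n → ℝ) : Fin n → ℝ :=
  fun i => if ε i then -x i else x i

lemma abs_signFlip (ε : Fin n → Bool) (x : Fin n → ℝ) (i : Fin n) :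
    |signFlip ε x i| = |x i| := by
  unfold signFlip
  split_ifs <;> simp

lemma signFlip_decide_neg (x : Fin n → ℝ) :
    signFlip (fun i => decide (x i < 0)) x = fun i => |x i| := by
  funext i
  by_cases h : x i < 0
  · simp [signFlip, h, abs_of_neg h]
  · simp [signFlip, h, abs_of_nonneg (not_lt.1 h)]

lemma measurePreserving_signFlip (ε : Fin n → Bool) :
    MeasurePreserving (signFlip ε) :=
  volume_preserving_pi (f := fun i (t : ℝ) => if ε i then -t else t) fun i => by
    cases ε i
    · exact MeasurePreserving.id volume
    · exact Measure.measurePreserving_neg volume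

lemma volume_eq_two_pow_mul_volume_pos_inter {K : Set (Fin n → ℝ)} (hK : MeasurableSet K)
    (habs : ∀ x, x ∈ K ↔ (fun i => |x i|) ∈ K) :
    volume K = 2 ^ n * volume (univ.pi (fun _ => Ioi 0) ∩ K) := by
  set A := univ.pi (fun _ => Ioi (0 : ℝ)) ∩ K
  have hA : MeasurableSet A := (MeasurableSet.univ_pi fun _ => measurableSet_Ioi).inter hK
  have hdisj : Pairwise (Function.onFun Disjoint fun ε => signFlip ε ⁻¹' A) := by
    intro ε ε' hne
    obtain ⟨i, hi⟩ := Function.ne_iff.1 hne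
    refine Set.disjoint_left.2 fun x hx hx' => ?_
    have h := hx.1 i trivial
    have h' := hx'.1 i trivial
    simp only [signFlip, mem_Ioi] at h h'
    cases hε : ε i <;> cases hε' : ε' i <;> simp_all <;> linarith
  have hcover : K =ᵐ[volume] ⋃ ε, signFlip ε ⁻¹' A := by
    filter_upwards [ae_all_iff.2 fun i => Measure.ae_eval_ne _ i 0] with x hx
    refine propext ⟨fun hxK => mem_iUnion.2 ⟨fun i => decide (x i < 0), ?_⟩, fun hxA => ?_⟩
    · rw [mem_preimage, signFlip_decide_neg]
      exact ⟨fun i _ => abs_pos.2 (hx i), (habs x).1 hxK⟩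
    · obtain ⟨ε, -, hεK⟩ := mem_iUnion.1 hxA
      refine (habs x).2 ?_
      rw [← funext (abs_signFlip ε x)]
      exact (habs _).1 hεK
  calc volume K = volume (⋃ ε, signFlip ε ⁻¹' A) := measure_congr hcover
    _ = ∑ ε, volume (signFlip ε ⁻¹' A) := by
      rw [measure_iUnion hdisj fun ε => hA.preimage (measurePreserving_signFlip ε).measurable,
        tsum_fintype]
    _ = 2 ^ n * volume A := by
      simp [(measurePreserving_signFlip _).measure_preimage hA.nullMeasurableSet]

lemma measurableSet_euclideanUnitBall : MeasurableSet (euclideanUnitBall n) :=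
  measurableSet_lt (by fun_prop) measurable_const

lemma volume_euclideanUnitBall :
    volume (euclideanUnitBall n) =
      ENNReal.ofReal (Real.pi ^ ((n : ℝ) / 2) / Real.Gamma ((n : ℝ) / 2 + 1)) := by
  have hball : euclideanUnitBall n = {x | ∑ i, |x i| ^ (2 : ℝ) < 1} := by
    simp [euclideanUnitBall, sq_abs]
  have hΓ : 2 * Real.Gamma (1 / 2 + 1) = √Real.pi := by
    rw [Real.Gamma_add_one (by norm_num), Real.Gamma_one_half_eq]
    ring
  rw [hball, volume_sum_rpow_lt_one _ one_le_two, Fintype.card_fin, hΓ, Real.sqrt_eq_rpow,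
    ← Real.rpow_natCast, ← Real.rpow_mul Real.pi_pos.le, one_div_mul_eq_div]

lemma volume_pos_inter_euclideanUnitBall :
    2 ^ n * volume (univ.pi (fun _ => Ioi 0) ∩ euclideanUnitBall n) =
      ENNReal.ofReal (Real.pi ^ ((n : ℝ) / 2) / Real.Gamma ((n : ℝ) / 2 + 1)) := by
  rw [← volume_eq_two_pow_mul_volume_pos_inter measurableSet_euclideanUnitBall
    (by simp [euclideanUnitBall, sq_abs]), volume_euclideanUnitBall]

lemma ae_apply_ne_apply {ι : Type*} [Fintype ι] (μ : Measure (ι → ℝ)) [μ.IsAddHaarMeasure]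
    {i j : ι} (hij : i ≠ j) : ∀ᵐ s ∂μ, s i ≠ s j := by
  classical
  let L : (ι → ℝ) →ₗ[ℝ] ℝ :=
    LinearMap.proj (R := ℝ) (φ := fun _ : ι => ℝ) i - LinearMap.proj j
  have hker : {s : ι → ℝ | s i = s j} = (LinearMap.ker L : Set (ι → ℝ)) := by
    ext s
    simp [L, sub_eq_zero]
  have hnull : μ {s | s i = s j} = 0 := by
    rw [hker]
    refine Measure.addHaar_submodule μ _ fun htop => ?_
    have : L (Pi.single i 1) = 0 := LinearMap.mem_ker.1 (htop ▸ Submodule.mem_top)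
    simp [L, hij.symm] at this
  exact measure_eq_zero_iff_ae_notMem.1 hnull

lemma ae_injective {ι : Type*} [Fintype ι] (μ : Measure (ι → ℝ)) [μ.IsAddHaarMeasure] :
    ∀ᵐ s ∂μ, Function.Injective s := by
  have h (i j : ι) : ∀ᵐ s ∂μ, s i = s j → i = j := by
    rcases eq_or_ne i j with rfl | hij
    · exact .of_forall fun _ _ => rfl
    · filter_upwards [ae_apply_ne_apply μ hij] with s hs h using absurd h hs
  filter_upwards [ae_all_iff.2 fun i => ae_all_iff.2 (h i)] with s hs i j using hs i j

lemma simplex_ae_eq_openSimplex : simplex n =ᵐ[volume] openSimplex n := by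
  filter_upwards [ae_injective (volume : Measure (Fin n → ℝ)),
    ae_all_iff.2 fun i => Measure.ae_eval_ne _ i 0,
    ae_all_iff.2 fun i => Measure.ae_eval_ne _ i 1] with s hinj h0 h1
  exact propext
    ⟨fun ⟨hs, hpos, hle⟩ => ⟨hs.strictMono_of_injective hinj,
      fun i => (hpos i).lt_of_ne (h0 i).symm, fun i => (hle i).lt_of_ne (h1 i)⟩,
    fun ⟨hs, hpos, hlt⟩ => ⟨hs.monotone, fun i => (hpos i).le, fun i => (hlt i).le⟩⟩

lemma abs_det_smul_integrand_cumSumSq {x : Fin n → ℝ} (hx : ∀ i, 0 < x i) :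
    |(cumSumSqDeriv x).det| • (∏ i, √(gap (cumSumSq x) i))⁻¹ = 2 ^ n := by
  have hprod : 0 < ∏ i, x i := Finset.prod_pos fun i _ => hx i
  simp only [det_cumSumSqDeriv, cumSumSq, gap_partialSum, Pi.pow_apply,
    Real.sqrt_sq (hx _).le, Finset.prod_mul_distrib, Finset.prod_const, Finset.card_univ,
    Fintype.card_fin, smul_eq_mul]
  rw [abs_of_pos (by positivity), mul_assoc, mul_inv_cancel₀ hprod.ne', mul_one]

end OrderedSimplex

open OrderedSimplex in
theorem integral_simplex_prod_inv_sqrt_gaps_general (n : ℕ) :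
    (∫ s : Fin n → ℝ in
        {s | (∀ i j : Fin n, i ≤ j → s i ≤ s j) ∧ (∀ i, 0 ≤ s i) ∧ (∀ i, s i ≤ 1)},
      (∏ i : Fin n,
        Real.sqrt (s i -
          if (i : ℕ) = 0 then 0
          else s ⟨(i : ℕ) - 1, lt_of_le_of_lt (Nat.sub_le _ _) i.isLt⟩))⁻¹)
    = Real.pi ^ ((n : ℝ) / 2) / Real.Gamma ((n : ℝ) / 2 + 1) := by
  have hU : MeasurableSet (univ.pi (fun _ => Ioi (0 : ℝ)) ∩ euclideanUnitBall n) :=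
    (MeasurableSet.univ_pi fun _ => measurableSet_Ioi).inter measurableSet_euclideanUnitBall
  change ∫ s in simplex n, (∏ i, √(gap s i))⁻¹ = _
  rw [setIntegral_congr_set simplex_ae_eq_openSimplex, ← cumSumSq_image,
    integral_image_eq_integral_abs_det_fderiv_smul volume hU
      (fun x _ => (hasFDerivAt_cumSumSq x).hasFDerivWithinAt)
      (injOn_cumSumSq.mono (inter_subset_left.trans (pi_mono fun _ _ => Ioi_subset_Ici_self))),
    setIntegral_congr_fun hU fun x hx => abs_det_smul_integrand_cumSumSq fun i => hx.1 i trivial,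
    setIntegral_const, smul_eq_mul, measureReal_def, mul_comm, ← ENNReal.toReal_ofReal
      (by positivity : 0 ≤ Real.pi ^ ((n : ℝ) / 2) / Real.Gamma ((n : ℝ) / 2 + 1)),
    ← volume_pos_inter_euclideanUnitBall, ENNReal.toReal_mul, ENNReal.toReal_pow,
    ENNReal.toReal_ofNat]

/-- Integral over the ordered simplex `{0 ≤ s₁ ≤ ⋯ ≤ sₙ ≤ 1}` of the product of inverse
square roots of the consecutive gaps equals `π^{n/2} / Γ(n/2 + 1)`. -/
theorem integral_simplex_prod_inv_sqrt_gaps (n : ℕ) (hn : 1 ≤ n) :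
    (∫ s : Fin n → ℝ in
        {s | (∀ i j : Fin n, i ≤ j → s i ≤ s j) ∧ (∀ i, 0 ≤ s i) ∧ (∀ i, s i ≤ 1)},
      (∏ i : Fin n,
        Real.sqrt (s i -
          if (i : ℕ) = 0 then 0
          else s ⟨(i : ℕ) - 1, lt_of_le_of_lt (Nat.sub_le _ _) i.isLt⟩))⁻¹)
    = Real.pi ^ ((n : ℝ) / 2) / Real.Gamma ((n : ℝ) / 2 + 1) :=
  integral_simplex_prod_inv_sqrt_gaps_general n
end

section
/- Let B be a standard real Brownian motion started at 0 and S_t = sup_{s ≤ t} B_s. Then for every t > 0, a ≥ 0 and b ≤ a, P(S_t ≥ a, B_t ≤ b) = P(B_t ≥ 2a − b) (the reflection principle). -/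
/-!
Sample `B` on a grid `0 = t₀ ≤ ⋯ ≤ tₙ = t`. The increments are independent centred Gaussians,
so their joint law is a product of symmetric measures, and it is preserved by negating every
increment after the first index `k` at which the partial sums exceed `c`. This reflection keeps
the first-passage event and replaces `B_t` by `2 B_{t_k} - B_t`, so it maps `{B_t ≤ b}` into
`{B_t ≥ 2c - b}`; summing over `k` gives `P(max_k B_{t_k} > c, B_t ≤ b) ≤ P(B_t ≥ 2c - b)`.
Conversely, since `B_{t_k} ≤ c + δ` unless some grid increment exceeds `δ`,
`P(B_t ≥ 2(c + δ) - b)` is bounded by the same probability plus the probability of such a large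
increment.

Along uniform grids of mesh `t / n → 0`, path continuity turns the grid maximum into `S_t` and
makes large increments negligible. Hence `P(S_t ≥ a, B_t ≤ b)` lies between `P(B_t ≥ y)` for
`y > 2a - b` and for `y < 2a - b`, and the Gaussian law of `B_t` has no atoms.
-/

open MeasureTheory ProbabilityTheory Filter Set

/-- A standard one-dimensional Brownian motion started at `0`: continuous paths,
independent increments, with `B_t - B_s` Gaussian of variance `t - s`. -/
def IsStandardBM {Ω : Type*} [MeasureSpace Ω] (B : ℝ → Ω → ℝ) : Prop :=
  IsProbabilityMeasure (ℙ : Measure Ω) ∧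
  (∀ t, Measurable (B t)) ∧
  (∀ᵐ ω, B 0 ω = 0) ∧
  (∀ᵐ ω, Continuous fun t => B t ω) ∧
  (∀ s t : ℝ, 0 ≤ s → s ≤ t →
    Measure.map (fun ω => B t ω - B s ω) ℙ = gaussianReal 0 (Real.toNNReal (t - s))) ∧
  (∀ n : ℕ, ∀ ts : Fin (n + 1) → ℝ, Monotone ts → (∀ i, 0 ≤ ts i) →
    iIndepFun
      (fun i : Fin n => fun ω => B (ts i.succ) ω - B (ts i.castSucc) ω) ℙ)

open scoped ENNReal Topology

section Reflection

variable {n : ℕ}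

def reflectFrom {G : Type*} [Neg G] (k : Fin (n + 1)) (x : Fin n → G) : Fin n → G :=
  fun i => if k ≤ i.castSucc then -x i else x i

section AddCommGroup

variable {G : Type*} [AddCommGroup G]

lemma partialSum_reflectFrom_of_le {j k : Fin (n + 1)} (hjk : j ≤ k) (x : Fin n → G) :
    Fin.partialSum (reflectFrom k x) j = Fin.partialSum x j := by
  induction j using Fin.induction with
  | zero => simp
  | succ j ih =>
    have hj : j.castSucc < k := Fin.castSucc_lt_succ.trans_le hjk
    rw [Fin.partialSum_succ, Fin.partialSum_succ, ih hj.le, reflectFrom, if_neg hj.not_ge]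

lemma partialSum_reflectFrom_of_ge {j k : Fin (n + 1)} (hkj : k ≤ j) (x : Fin n → G) :
    Fin.partialSum (reflectFrom k x) j = 2 • Fin.partialSum x k - Fin.partialSum x j := by
  induction j using Fin.induction with
  | zero =>
    obtain rfl : k = 0 := Fin.le_zero_iff.1 hkj
    simp
  | succ j ih =>
    rcases hkj.eq_or_lt with rfl | hlt
    · rw [partialSum_reflectFrom_of_le le_rfl, two_nsmul, add_sub_cancel_right]
    · have hk : k ≤ j.castSucc := Fin.le_castSucc_iff.2 hlt
      rw [Fin.partialSum_succ, Fin.partialSum_succ, ih hk, reflectFrom, if_pos hk]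
      abel

end AddCommGroup

lemma measurable_partialSum (k : Fin (n + 1)) :
    Measurable fun x : Fin n → ℝ => Fin.partialSum x k := by
  induction k using Fin.induction with
  | zero => simp only [Fin.partialSum_zero]; exact measurable_const
  | succ j ih => simp only [Fin.partialSum_succ]; exact ih.add (measurable_pi_apply j)

def firstPassage (c : ℝ) (k : Fin (n + 1)) : Set (Fin n → ℝ) :=
  {x | (∀ j < k, Fin.partialSum x j ≤ c) ∧ c < Fin.partialSum x k}

lemma measurableSet_firstPassage (c : ℝ) (k : Fin (n + 1)) :
    MeasurableSet (firstPassage (n := n) c k) := by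
  simp only [firstPassage, ofPred_and, ofPred_forall]
  exact (MeasurableSet.iInter fun j => MeasurableSet.iInter fun _ =>
    measurableSet_le (measurable_partialSum j) measurable_const).inter
    (measurableSet_lt measurable_const (measurable_partialSum k))

lemma pairwise_disjoint_firstPassage (c : ℝ) :
    Pairwise (Function.onFun Disjoint (firstPassage (n := n) c)) := by
  have key {k l : Fin (n + 1)} (hkl : k < l) : Disjoint (firstPassage c k) (firstPassage c l) :=
    disjoint_left.2 fun _ hk hl => (hl.1 k hkl).not_gt hk.2
  intro k l hkl
  rcases hkl.lt_or_gt with h | h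
  exacts [key h, (key h).symm]

lemma iUnion_firstPassage (c : ℝ) :
    ⋃ k, firstPassage (n := n) c k = {x | ∃ k, c < Fin.partialSum x k} := by
  ext x
  simp only [mem_iUnion, mem_ofPred_eq]
  refine ⟨fun ⟨k, hk⟩ => ⟨k, hk.2⟩, fun ⟨k, hk⟩ => ?_⟩
  obtain ⟨k₀, hk₀, hmin⟩ := wellFounded_lt.has_min {k | c < Fin.partialSum x k} ⟨k, hk⟩
  exact ⟨k₀, fun j hj => not_lt.1 fun h => hmin j h hj, hk₀⟩

lemma reflectFrom_mem_firstPassage_iff {c : ℝ} {k : Fin (n + 1)} {x : Fin n → ℝ} :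
    reflectFrom k x ∈ firstPassage c k ↔ x ∈ firstPassage c k :=
  and_congr (forall₂_congr fun j hj => by rw [partialSum_reflectFrom_of_le hj.le])
    (by rw [partialSum_reflectFrom_of_le le_rfl])

lemma measure_iUnion_firstPassage_inter (μ : Measure (Fin n → ℝ)) (c : ℝ)
    {E : Fin (n + 1) → Set (Fin n → ℝ)} (hE : ∀ k, MeasurableSet (E k)) :
    μ (⋃ k, firstPassage c k ∩ E k) = ∑ k, μ (firstPassage c k ∩ E k) := by
  rw [measure_iUnion (fun k l hkl => ((pairwise_disjoint_firstPassage c hkl).mono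
    inter_subset_left inter_subset_left)) fun k => (measurableSet_firstPassage c k).inter (hE k),
    tsum_fintype]

lemma firstPassage_inter_subset_exists_lt {c δ : ℝ} (hc : 0 ≤ c) (k : Fin (n + 1)) :
    firstPassage c k ∩ {x | c + δ < Fin.partialSum x k} ⊆ {x | ∃ i, δ < x i} := by
  rintro x ⟨⟨hbefore, hk⟩, hover⟩
  induction k using Fin.cases with
  | zero => simp only [Fin.partialSum_zero] at hk; linarith
  | succ j =>
    have := hbefore j.castSucc Fin.castSucc_lt_succ
    simp only [mem_ofPred_eq, Fin.partialSum_succ] at hover ⊢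
    exact ⟨j, by linarith⟩

variable (ν : Fin n → Measure ℝ) [∀ i, SigmaFinite (ν i)] [∀ i, (ν i).IsNegInvariant]

lemma measurePreserving_reflectFrom (k : Fin (n + 1)) :
    MeasurePreserving (reflectFrom k) (Measure.pi ν) (Measure.pi ν) := by
  have := measurePreserving_pi ν ν (f := fun i => if k ≤ i.castSucc then Neg.neg else id)
    fun i => by split_ifs; exacts [Measure.measurePreserving_neg _, MeasurePreserving.id _]
  convert this using 2 with x
  ext i
  simp only [reflectFrom]
  split_ifs <;> rfl

lemma measure_firstPassage_inter_reflect (c : ℝ) (k : Fin (n + 1)) {U : Set ℝ}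
    (hU : MeasurableSet U) :
    Measure.pi ν (firstPassage c k ∩
        {x | 2 * Fin.partialSum x k - Fin.partialSum x (Fin.last n) ∈ U})
      = Measure.pi ν (firstPassage c k ∩ {x | Fin.partialSum x (Fin.last n) ∈ U}) := by
  have hA : reflectFrom k ⁻¹' firstPassage c k = firstPassage c k :=
    ext fun _ => reflectFrom_mem_firstPassage_iff
  have hT : {x | 2 * Fin.partialSum x k - Fin.partialSum x (Fin.last n) ∈ U}
      = reflectFrom k ⁻¹' {x | Fin.partialSum x (Fin.last n) ∈ U} := by
    ext x
    rw [mem_preimage, mem_ofPred_eq, mem_ofPred_eq,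
      partialSum_reflectFrom_of_ge (Fin.le_last k), two_nsmul, two_mul]
  have hAT : MeasurableSet (firstPassage c k ∩ {x | Fin.partialSum x (Fin.last n) ∈ U}) :=
    (measurableSet_firstPassage c k).inter (measurable_partialSum _ hU)
  rw [hT, ← (measurePreserving_reflectFrom ν k).measure_preimage hAT.nullMeasurableSet,
    preimage_inter, hA]

theorem pi_exists_lt_partialSum_and_last_le_le (c b : ℝ) :
    Measure.pi ν {x | (∃ k, c < Fin.partialSum x k) ∧ Fin.partialSum x (Fin.last n) ≤ b}
      ≤ Measure.pi ν {x | 2 * c - b ≤ Fin.partialSum x (Fin.last n)} := by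
  set S : (Fin n → ℝ) → ℝ := fun x => Fin.partialSum x (Fin.last n)
  have hS : Measurable S := measurable_partialSum _
  calc Measure.pi ν {x | (∃ k, c < Fin.partialSum x k) ∧ S x ≤ b}
      = Measure.pi ν (⋃ k, firstPassage c k ∩ {x | S x ≤ b}) := by
        rw [← iUnion_inter, iUnion_firstPassage]; rfl
    _ = ∑ k, Measure.pi ν (firstPassage c k ∩ {x | S x ≤ b}) :=
        measure_iUnion_firstPassage_inter _ c fun _ => measurableSet_le hS measurable_const
    _ = ∑ k, Measure.pi ν (firstPassage c k ∩ {x | 2 * Fin.partialSum x k - S x ≤ b}) :=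
        Finset.sum_congr rfl fun k _ =>
          (measure_firstPassage_inter_reflect ν c k measurableSet_Iic).symm
    _ ≤ ∑ k, Measure.pi ν (firstPassage c k ∩ {x | 2 * c - b ≤ S x}) :=
        Finset.sum_le_sum fun k _ => measure_mono fun x ⟨hA, hx⟩ => ⟨hA, by
          simp only [mem_ofPred_eq] at hx ⊢; linarith [hA.2]⟩
    _ = Measure.pi ν (⋃ k, firstPassage c k ∩ {x | 2 * c - b ≤ S x}) :=
        (measure_iUnion_firstPassage_inter _ c fun _ => measurableSet_le measurable_const hS).symm
    _ ≤ Measure.pi ν {x | 2 * c - b ≤ S x} :=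
        measure_mono (iUnion_subset fun _ => inter_subset_right)

theorem pi_le_exists_lt_partialSum_and_last_le_add {c b δ : ℝ} (hc : 0 ≤ c) (hb : b ≤ c)
    (hδ : 0 < δ) :
    Measure.pi ν {x | 2 * (c + δ) - b ≤ Fin.partialSum x (Fin.last n)}
      ≤ Measure.pi ν
          {x | (∃ k, c < Fin.partialSum x k) ∧ Fin.partialSum x (Fin.last n) ≤ b}
        + Measure.pi ν {x | ∃ i, δ < x i} := by
  set S : (Fin n → ℝ) → ℝ := fun x => Fin.partialSum x (Fin.last n)
  have hS : Measurable S := measurable_partialSum _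
  have hT : {x | 2 * (c + δ) - b ≤ S x}
      = ⋃ k, firstPassage c k ∩ {x | 2 * (c + δ) - b ≤ S x} := by
    rw [← iUnion_inter, iUnion_firstPassage, inter_eq_right.2]
    exact fun x hx => ⟨Fin.last n, by simp only [mem_ofPred_eq] at hx; linarith⟩
  calc Measure.pi ν {x | 2 * (c + δ) - b ≤ S x}
      = ∑ k, Measure.pi ν (firstPassage c k ∩ {x | 2 * (c + δ) - b ≤ S x}) := by
        conv_lhs => rw [hT]
        exact measure_iUnion_firstPassage_inter _ c fun _ => measurableSet_le measurable_const hS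
    _ = ∑ k, Measure.pi ν
          (firstPassage c k ∩ {x | 2 * (c + δ) - b ≤ 2 * Fin.partialSum x k - S x}) :=
        Finset.sum_congr rfl fun k _ =>
          (measure_firstPassage_inter_reflect ν c k measurableSet_Ici).symm
    _ ≤ ∑ k, (Measure.pi ν (firstPassage c k ∩ {x | S x ≤ b})
          + Measure.pi ν (firstPassage c k ∩ {x | c + δ < Fin.partialSum x k})) := by
        refine Finset.sum_le_sum fun k _ => (measure_mono ?_).trans (measure_union_le _ _)
        rintro x ⟨hA, hx⟩
        by_cases h : Fin.partialSum x k ≤ c + δ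
        · exact Or.inl ⟨hA, by simp only [mem_ofPred_eq] at hx ⊢; linarith⟩
        · exact Or.inr ⟨hA, not_le.1 h⟩
    _ = Measure.pi ν (⋃ k, firstPassage c k ∩ {x | S x ≤ b})
          + Measure.pi ν (⋃ k, firstPassage c k ∩ {x | c + δ < Fin.partialSum x k}) := by
        rw [Finset.sum_add_distrib,
          measure_iUnion_firstPassage_inter _ c fun _ => measurableSet_le hS measurable_const,
          measure_iUnion_firstPassage_inter _ c fun k =>
            measurableSet_lt measurable_const (measurable_partialSum k)]
    _ ≤ Measure.pi ν {x | (∃ k, c < Fin.partialSum x k) ∧ S x ≤ b}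
          + Measure.pi ν {x | ∃ i, δ < x i} := by
        rw [← iUnion_inter, iUnion_firstPassage]
        exact add_le_add le_rfl
          (measure_mono (iUnion_subset fun k => firstPassage_inter_subset_exists_lt hc k))

end Reflection

instance gaussianReal_isNegInvariant (v : NNReal) : (gaussianReal 0 v).IsNegInvariant :=
  ⟨by simpa [Measure.neg] using gaussianReal_map_neg (μ := 0) (v := v)⟩

lemma measure_setOf_eventually_mem_le {α : Type*} [MeasurableSpace α] (μ : Measure α)
    {E : ℕ → Set α} {r : ℝ≥0∞} (h : ∀ᶠ n in atTop, μ (E n) ≤ r) :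
    μ {x | ∀ᶠ n in atTop, x ∈ E n} ≤ r := by
  have hE : {x | ∀ᶠ n in atTop, x ∈ E n} = ⋃ N, ⋂ n ≥ N, E n := by
    ext x
    simp [eventually_atTop]
  obtain ⟨N₀, hN₀⟩ := eventually_atTop.1 h
  rw [hE, Monotone.measure_iUnion fun N M hNM =>
    biInter_subset_biInter_left fun n hn => hNM.trans hn]
  exact iSup_le fun N => (measure_mono (biInter_subset_of_mem (le_max_left N N₀))).trans
    (hN₀ _ (le_max_right N N₀))

lemma eq_measure_Ici_of_forall_lt_of_forall_gt {μ : Measure ℝ} [IsFiniteMeasure μ]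
    [NullSingletonClass μ] {L : ℝ≥0∞} {x : ℝ} (hlt : ∀ y < x, L ≤ μ (Ici y))
    (hgt : ∀ y, x < y → μ (Ici y) ≤ L) : L = μ (Ici x) := by
  have hinter : ⋂ n : ℕ, Ici (x - 1 / (n + 1)) = Ici x := by
    ext y
    simp only [mem_iInter, mem_Ici]
    refine ⟨fun h => le_of_forall_pos_lt_add fun ε hε => ?_, fun h n => ?_⟩
    · obtain ⟨n, hn⟩ := exists_nat_one_div_lt hε
      linarith [h n]
    · linarith [Nat.one_div_pos_of_nat (α := ℝ) (n := n)]
  have hunion : ⋃ n : ℕ, Ici (x + 1 / (n + 1)) = Ioi x := by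
    ext y
    simp only [mem_iUnion, mem_Ici, mem_Ioi]
    refine ⟨fun ⟨n, hn⟩ => by linarith [Nat.one_div_pos_of_nat (α := ℝ) (n := n)],
      fun h => ?_⟩
    obtain ⟨n, hn⟩ := exists_nat_one_div_lt (sub_pos.2 h)
    exact ⟨n, by linarith⟩
  refine le_antisymm ?_ ?_
  · rw [← hinter, Antitone.measure_iInter (fun m n hmn => Ici_subset_Ici.2 ?_)
      (fun _ => measurableSet_Ici.nullMeasurableSet) ⟨0, measure_ne_top _ _⟩]
    · exact le_iInf fun n => hlt _ (by linarith [Nat.one_div_pos_of_nat (α := ℝ) (n := n)])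
    · gcongr
  · rw [← measure_congr Ioi_ae_eq_Ici, ← hunion,
      Monotone.measure_iUnion fun m n hmn => Ici_subset_Ici.2 (by gcongr)]
    exact iSup_le fun n => hgt _ (by linarith [Nat.one_div_pos_of_nat (α := ℝ) (n := n)])

noncomputable def uniformGrid (t : ℝ) (n : ℕ) (k : Fin (n + 1)) : ℝ := k * t / n

section UniformGrid

variable {t : ℝ} {n : ℕ}

@[simp]
lemma uniformGrid_zero : uniformGrid t n 0 = 0 := by simp [uniformGrid]

lemma uniformGrid_last (hn : n ≠ 0) : uniformGrid t n (Fin.last n) = t := by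
  simp [uniformGrid, hn]

lemma monotone_uniformGrid (ht : 0 ≤ t) : Monotone (uniformGrid t n) := fun i j hij => by
  unfold uniformGrid
  gcongr
  exact_mod_cast hij

lemma uniformGrid_mem_Icc (ht : 0 ≤ t) (k : Fin (n + 1)) : uniformGrid t n k ∈ Icc 0 t := by
  refine ⟨by unfold uniformGrid; positivity, ?_⟩
  rcases eq_or_ne n 0 with rfl | hn
  · simpa [uniformGrid] using ht
  · simpa only [uniformGrid_last hn] using monotone_uniformGrid ht (Fin.le_last k)

lemma uniformGrid_succ_sub_castSucc (i : Fin n) :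
    uniformGrid t n i.succ - uniformGrid t n i.castSucc = t / n := by
  simp only [uniformGrid, Fin.val_succ, Fin.val_castSucc, Nat.cast_add, Nat.cast_one]
  ring

end UniformGrid

namespace ContinuousOn

variable {f : ℝ → ℝ} {t : ℝ}

lemma eventually_exists_uniformGrid_lt (hf : ContinuousOn f (Icc 0 t)) (ht : 0 < t) {s c : ℝ}
    (hs : s ∈ Icc 0 t) (hc : c < f s) :
    ∀ᶠ n in atTop, ∃ k : Fin (n + 1), c < f (uniformGrid t n k) := by
  have hk (n : ℕ) : ⌊s / t * n⌋₊ < n + 1 :=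
    Nat.lt_succ_of_le (Nat.floor_le_of_le
      (mul_le_of_le_one_left n.cast_nonneg ((div_le_one ht).2 hs.2)))
  have hlim : Tendsto (fun n : ℕ => uniformGrid t n ⟨⌊s / t * n⌋₊, hk n⟩) atTop
      (𝓝[Icc 0 t] s) := by
    refine tendsto_nhdsWithin_iff.2
      ⟨?_, Eventually.of_forall fun n => uniformGrid_mem_Icc ht.le _⟩
    have := ((tendsto_nat_floor_mul_div_atTop (div_nonneg hs.1 ht.le)).comp
      tendsto_natCast_atTop_atTop).mul_const t
    rw [div_mul_cancel₀ _ ht.ne'] at this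
    exact this.congr fun n => by simp [uniformGrid, div_mul_eq_mul_div]
  exact (((hf s hs).tendsto.comp hlim).eventually (lt_mem_nhds hc)).mono fun n hn => ⟨_, hn⟩

lemma eventually_forall_uniformGrid_sub_le (hf : ContinuousOn f (Icc 0 t)) (ht : 0 ≤ t)
    {δ : ℝ} (hδ : 0 < δ) :
    ∀ᶠ n in atTop, ∀ i : Fin n,
      f (uniformGrid t n i.succ) - f (uniformGrid t n i.castSucc) ≤ δ := by
  obtain ⟨d, hd, hfd⟩ := Metric.uniformContinuousOn_iff.1
    (isCompact_Icc.uniformContinuousOn_of_continuous hf) δ hδ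
  filter_upwards [(tendsto_const_div_atTop_nhds_zero_nat t).eventually (gt_mem_nhds hd)]
    with n hn i
  have hclose : dist (uniformGrid t n i.succ) (uniformGrid t n i.castSucc) < d := by
    rwa [Real.dist_eq, uniformGrid_succ_sub_castSucc, abs_of_nonneg (by positivity)]
  have := hfd _ (uniformGrid_mem_Icc ht _) _ (uniformGrid_mem_Icc ht _) hclose
  rw [Real.dist_eq] at this
  exact (le_abs_self _).trans this.le

lemma le_ciSup_subtype {K : Set ℝ} (hK : IsCompact K)
    (hf : ContinuousOn f K) {s : ℝ} (hs : s ∈ K) : f s ≤ ⨆ x : K, f x :=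
  le_ciSup (f := fun x : K => f x) (image_eq_range f K ▸ hK.bddAbove_image hf) ⟨s, hs⟩

end ContinuousOn

section Increments

variable {Ω : Type*} {n : ℕ}

def increments (B : ℝ → Ω → ℝ) (ts : Fin (n + 1) → ℝ) (ω : Ω) : Fin n → ℝ :=
  fun i => B (ts i.succ) ω - B (ts i.castSucc) ω

lemma partialSum_increments (B : ℝ → Ω → ℝ) (ts : Fin (n + 1) → ℝ) (ω : Ω) (k : Fin (n + 1)) :
    Fin.partialSum (increments B ts ω) k = B (ts k) ω - B (ts 0) ω := by
  induction k using Fin.induction with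
  | zero => simp
  | succ k ih => rw [Fin.partialSum_succ, ih, increments]; ring

end Increments

namespace IsStandardBM

variable {Ω : Type*} [MeasureSpace Ω] {B : ℝ → Ω → ℝ} {n : ℕ} {ts : Fin (n + 1) → ℝ}
  {t a b : ℝ}

lemma isProbabilityMeasure (hB : IsStandardBM B) : IsProbabilityMeasure (ℙ : Measure Ω) := hB.1

lemma measurable (hB : IsStandardBM B) (t : ℝ) : Measurable (B t) := hB.2.1 t

lemma ae_eq_zero (hB : IsStandardBM B) : ∀ᵐ ω, B 0 ω = 0 := hB.2.2.1

lemma ae_continuous (hB : IsStandardBM B) : ∀ᵐ ω, Continuous fun t => B t ω := hB.2.2.2.1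

lemma map_sub (hB : IsStandardBM B) {s : ℝ} (hs : 0 ≤ s) (hst : s ≤ t) :
    Measure.map (fun ω => B t ω - B s ω) ℙ = gaussianReal 0 (t - s).toNNReal :=
  hB.2.2.2.2.1 s t hs hst

lemma iIndepFun_increments (hB : IsStandardBM B) (hts : Monotone ts)
    (hts_nonneg : ∀ i, 0 ≤ ts i) :
    iIndepFun (fun i ω => increments B ts ω i) ℙ :=
  hB.2.2.2.2.2 n ts hts hts_nonneg

lemma map_eq_gaussianReal (hB : IsStandardBM B) (ht : 0 ≤ t) :
    Measure.map (B t) ℙ = gaussianReal 0 t.toNNReal := by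
  rw [← sub_zero t, ← hB.map_sub le_rfl ht]
  exact Measure.map_congr (by filter_upwards [hB.ae_eq_zero] with ω hω; simp [hω])

lemma map_increments (hB : IsStandardBM B) (hts : Monotone ts) (hts₀ : 0 ≤ ts 0) :
    Measure.map (increments B ts) ℙ
      = Measure.pi fun i => gaussianReal 0 (ts i.succ - ts i.castSucc).toNNReal := by
  have := hB.isProbabilityMeasure
  have hmeas (i : Fin n) : Measurable fun ω => B (ts i.succ) ω - B (ts i.castSucc) ω :=
    (hB.measurable _).sub (hB.measurable _)
  have hts_nonneg (i : Fin (n + 1)) : 0 ≤ ts i := hts₀.trans (hts (Fin.zero_le i))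
  rw [show increments B ts = fun ω i => B (ts i.succ) ω - B (ts i.castSucc) ω from rfl,
    (iIndepFun_iff_map_fun_eq_pi_map fun i => (hmeas i).aemeasurable).1
    (hB.iIndepFun_increments hts hts_nonneg)]
  congr with i : 1
  exact hB.map_sub (hts_nonneg _) (hts (Fin.castSucc_le_succ i))

lemma measure_setOf_path_mem (hB : IsStandardBM B) (hts : Monotone ts) (hts₀ : ts 0 = 0)
    {E : Set (Fin (n + 1) → ℝ)} (hE : MeasurableSet E) :
    ℙ {ω | (fun k => B (ts k) ω) ∈ E}
      = Measure.pi (fun i => gaussianReal 0 (ts i.succ - ts i.castSucc).toNNReal)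
          (Fin.partialSum ⁻¹' E) := by
  have hpath : {ω | (fun k => B (ts k) ω) ∈ E}
      =ᵐ[ℙ] increments B ts ⁻¹' (Fin.partialSum ⁻¹' E) := by
    filter_upwards [hB.ae_eq_zero] with ω hω
    have : Fin.partialSum (increments B ts ω) = fun k => B (ts k) ω :=
      funext fun k => by rw [partialSum_increments, hts₀, hω, sub_zero]
    change (_ ∈ E) = (Fin.partialSum (increments B ts ω) ∈ E)
    rw [this]
  have hmeas : Measurable (increments B ts) :=
    measurable_pi_lambda _ fun i => (hB.measurable _).sub (hB.measurable _)
  rw [measure_congr hpath, ← Measure.map_apply hmeas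
    (measurable_pi_lambda _ measurable_partialSum hE), hB.map_increments hts hts₀.ge]

theorem measure_exists_lt_and_le_le (hB : IsStandardBM B) (hts : Monotone ts) (hts₀ : ts 0 = 0)
    (c b : ℝ) :
    ℙ {ω | (∃ k, c < B (ts k) ω) ∧ B (ts (Fin.last n)) ω ≤ b}
      ≤ ℙ {ω | 2 * c - b ≤ B (ts (Fin.last n)) ω} :=
  calc ℙ {ω | (∃ k, c < B (ts k) ω) ∧ B (ts (Fin.last n)) ω ≤ b}
      = _ := hB.measure_setOf_path_mem hts hts₀
          (E := {p | (∃ k, c < p k) ∧ p (Fin.last n) ≤ b}) (by measurability)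
    _ ≤ _ := pi_exists_lt_partialSum_and_last_le_le _ c b
    _ = _ := (hB.measure_setOf_path_mem hts hts₀
          (E := {p | 2 * c - b ≤ p (Fin.last n)}) (by measurability)).symm

theorem measure_le_measure_exists_lt_and_le_add (hB : IsStandardBM B) (hts : Monotone ts)
    (hts₀ : ts 0 = 0) {c b δ : ℝ} (hc : 0 ≤ c) (hb : b ≤ c) (hδ : 0 < δ) :
    ℙ {ω | 2 * (c + δ) - b ≤ B (ts (Fin.last n)) ω}
      ≤ ℙ {ω | (∃ k, c < B (ts k) ω) ∧ B (ts (Fin.last n)) ω ≤ b}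
        + ℙ {ω | ∃ i : Fin n, δ < B (ts i.succ) ω - B (ts i.castSucc) ω} := by
  have hinc : {x : Fin n → ℝ | ∃ i : Fin n,
      δ < Fin.partialSum x i.succ - Fin.partialSum x i.castSucc} = {x | ∃ i, δ < x i} := by
    simp only [Fin.partialSum_succ, add_sub_cancel_left]
  calc ℙ {ω | 2 * (c + δ) - b ≤ B (ts (Fin.last n)) ω}
      = _ := hB.measure_setOf_path_mem hts hts₀
          (E := {p | 2 * (c + δ) - b ≤ p (Fin.last n)}) (by measurability)
    _ ≤ _ := pi_le_exists_lt_partialSum_and_last_le_add _ hc hb hδ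
    _ = _ := by
      rw [← hinc]
      congr 1
      exacts [(hB.measure_setOf_path_mem hts hts₀
          (E := {p | (∃ k, c < p k) ∧ p (Fin.last n) ≤ b}) (by measurability)).symm,
        (hB.measure_setOf_path_mem hts hts₀
          (E := {p | ∃ i : Fin n, δ < p i.succ - p i.castSucc}) (by measurability)).symm]

theorem measure_sup_ge_and_le_le (hB : IsStandardBM B) (ht : 0 < t) {c : ℝ} (hca : c < a) :
    ℙ {ω | a ≤ (⨆ s : Icc (0:ℝ) t, B s ω) ∧ B t ω ≤ b}
      ≤ ℙ {ω | 2 * c - b ≤ B t ω} := by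
  have : Nonempty (Icc (0:ℝ) t) := ⟨⟨0, left_mem_Icc.2 ht.le⟩⟩
  calc ℙ {ω | a ≤ (⨆ s : Icc (0:ℝ) t, B s ω) ∧ B t ω ≤ b}
      ≤ ℙ {ω | ∀ᶠ n in atTop, (∃ k, c < B (uniformGrid t n k) ω) ∧ B t ω ≤ b} := by
        refine measure_mono_ae ?_
        filter_upwards [hB.ae_continuous] with ω hω ⟨hsup, hbt⟩
        obtain ⟨s, hs⟩ := exists_lt_of_lt_ciSup (hca.trans_le hsup)
        exact (hω.continuousOn.eventually_exists_uniformGrid_lt ht s.2 hs).mono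
          fun n hn => ⟨hn, hbt⟩
    _ ≤ ℙ {ω | 2 * c - b ≤ B t ω} := by
        refine measure_setOf_eventually_mem_le _ ((eventually_ne_atTop 0).mono fun n hn => ?_)
        have hbound := hB.measure_exists_lt_and_le_le (ts := uniformGrid t n)
          (monotone_uniformGrid ht.le) uniformGrid_zero c b
        rwa [uniformGrid_last hn] at hbound

theorem measure_le_measure_sup_ge_and_le (hB : IsStandardBM B) (ht : 0 < t) (ha : 0 ≤ a)
    (hb : b ≤ a) {δ : ℝ} (hδ : 0 < δ) :
    ℙ {ω | 2 * (a + δ) - b ≤ B t ω}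
      ≤ ℙ {ω | a ≤ (⨆ s : Icc (0:ℝ) t, B s ω) ∧ B t ω ≤ b} := by
  have := hB.isProbabilityMeasure
  set L := ℙ {ω | a ≤ (⨆ s : Icc (0:ℝ) t, B s ω) ∧ B t ω ≤ b}
  set O : ℕ → Set Ω := fun n =>
    {ω | ∃ i : Fin n, δ < B (uniformGrid t n i.succ) ω - B (uniformGrid t n i.castSucc) ω}
  have hgrid : ∀ᶠ n in atTop, ℙ {ω | 2 * (a + δ) - b ≤ B t ω} ≤ L + ℙ (O n) := by
    filter_upwards [eventually_ne_atTop 0] with n hn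
    have hbound := hB.measure_le_measure_exists_lt_and_le_add (ts := uniformGrid t n)
      (monotone_uniformGrid ht.le) uniformGrid_zero ha hb hδ
    rw [uniformGrid_last hn] at hbound
    refine hbound.trans (add_le_add_left (measure_mono_ae ?_) _)
    filter_upwards [hB.ae_continuous] with ω hω ⟨⟨k, hk⟩, hbt⟩
    exact ⟨hk.le.trans (hω.continuousOn.le_ciSup_subtype isCompact_Icc
      (uniformGrid_mem_Icc ht.le k)), hbt⟩
  have hO_meas (n : ℕ) : MeasurableSet (O n) := by
    simp only [O, ofPred_exists]
    exact MeasurableSet.iUnion fun i =>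
      measurableSet_lt measurable_const ((hB.measurable _).sub (hB.measurable _))
  have hO_ae : ∀ᵐ ω, ∀ᶠ n in atTop, ω ∈ O n ↔ ω ∈ (∅ : Set Ω) := by
    filter_upwards [hB.ae_continuous] with ω hω
    filter_upwards [hω.continuousOn.eventually_forall_uniformGrid_sub_le ht.le hδ] with n hn
    simpa [O] using hn
  have hO : Tendsto (fun n => ℙ (O n)) atTop (𝓝 0) := by
    simpa using tendsto_measure_of_ae_tendsto_indicator_of_isFiniteMeasure atTop
      MeasurableSet.empty hO_meas hO_ae
  simpa using ge_of_tendsto (tendsto_const_nhds.add hO) hgrid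

end IsStandardBM

/-- Reflection principle: `P(S_t ≥ a, B_t ≤ b) = P(B_t ≥ 2a − b)`. -/
theorem reflection_principle {Ω : Type*} [MeasureSpace Ω] (B : ℝ → Ω → ℝ)
    (hB : IsStandardBM B) (t a b : ℝ) (ht : 0 < t) (ha : 0 ≤ a) (hb : b ≤ a) :
    ℙ {ω | a ≤ (⨆ s : Icc (0:ℝ) t, B s ω) ∧ B t ω ≤ b} = ℙ {ω | 2 * a - b ≤ B t ω} := by
  have hlaw (y : ℝ) : ℙ {ω | y ≤ B t ω} = gaussianReal 0 t.toNNReal (Ici y) := by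
    rw [← hB.map_eq_gaussianReal ht.le, Measure.map_apply (hB.measurable t) measurableSet_Ici]
    rfl
  have := nullSingletonClass_gaussianReal (μ := 0) (Real.toNNReal_pos.2 ht).ne'
  rw [hlaw]
  refine eq_measure_Ici_of_forall_lt_of_forall_gt (fun y hy => ?_) (fun y hy => ?_)
  · have := hB.measure_sup_ge_and_le_le ht (a := a) (b := b) (c := (y + b) / 2) (by linarith)
    rwa [show 2 * ((y + b) / 2) - b = y by ring, hlaw] at this
  · have := hB.measure_le_measure_sup_ge_and_le ht ha hb (δ := (y - (2 * a - b)) / 2)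
      (by linarith)
    rwa [show 2 * (a + (y - (2 * a - b)) / 2) - b = y by ring, hlaw] at this
end

section
/- Let T₁ and T₁' be independent random variables, each with Laplace transform E[exp(−(λ²/2)T₁)] = λ/sinh(λ) (the first hitting time of 1 by a 3-dimensional Bessel process started at 0). Then E[√(T₁ + T₁')] = √(2/π). -/
/-!
Since `√s = (2√π)⁻¹ ∫₀^∞ (1 - e^{-us}) u^{-3/2} du` for `s ≥ 0`, Tonelli gives
`E[√S] = (2√π)⁻¹ ∫₀^∞ (1 - E[e^{-uS}]) u^{-3/2} du` for any nonnegative `S`. For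
`S = T₁ + T₁'`, independence gives `E[e^{-uS}] = (λ / sinh λ)²` with `λ = √(2u)`, and the
substitution `u = x²/2` turns the integral into `4√2 ∫₀^∞ (1/x² - 1/sinh² x) dx = 4√2`, the
last integral being computed from the antiderivative `coth x - 1/x`.
-/

open MeasureTheory ProbabilityTheory Set Filter Topology Real

noncomputable def coth (x : ℝ) : ℝ := cosh x / sinh x

lemma sinh_le_mul_cosh {x : ℝ} (hx : 0 ≤ x) : sinh x ≤ x * cosh x := by
  have hmono : MonotoneOn (fun y => y * cosh y - sinh y) (Ici 0) := by
    refine monotoneOn_of_hasDerivWithinAt_nonneg (f' := fun y => y * sinh y) (convex_Ici 0)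
      (by fun_prop) (fun y _ => ?_) (fun y hy => ?_)
    · refine (((hasDerivAt_id y).mul (hasDerivAt_cosh y)).sub (hasDerivAt_sinh y)).congr_deriv
        ?_ |>.hasDerivWithinAt
      simp only [id_eq]
      ring
    · rw [interior_Ici] at hy
      exact mul_nonneg (le_of_lt hy) (sinh_nonneg_iff.mpr (le_of_lt hy))
  simpa using hmono self_mem_Ici hx hx

lemma hasDerivAt_coth {x : ℝ} (hx : x ≠ 0) : HasDerivAt coth (-(sinh x ^ 2)⁻¹) x := by
  have hs : sinh x ≠ 0 := sinh_ne_zero.mpr hx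
  refine ((hasDerivAt_cosh x).div (hasDerivAt_sinh x) hs).congr_deriv ?_
  field_simp
  linear_combination -cosh_sq_sub_sinh_sq x

lemma coth_eq_one_add_exp_neg_sq_div {x : ℝ} (hx : x ≠ 0) :
    coth x = (1 + exp (-x) ^ 2) / (1 - exp (-x) ^ 2) := by
  have hs : sinh x ≠ 0 := sinh_ne_zero.mpr hx
  have he : 1 - exp (-x) ^ 2 ≠ 0 := by
    rw [sub_ne_zero, ← exp_nat_mul, ne_comm, Ne, exp_eq_one_iff]
    simpa using hx
  rw [coth, div_eq_div_iff hs he, cosh_eq, sinh_eq]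
  have := exp_add x (-x)
  rw [add_neg_cancel, exp_zero] at this
  linear_combination exp (-x) * this

lemma tendsto_coth_atTop : Tendsto coth atTop (𝓝 1) := by
  have hlim : Tendsto (fun x => (1 + exp (-x) ^ 2) / (1 - exp (-x) ^ 2)) atTop
      (𝓝 ((1 + 0 ^ 2) / (1 - 0 ^ 2))) :=
    ((tendsto_exp_neg_atTop_nhds_zero.pow 2).const_add 1).div
      ((tendsto_exp_neg_atTop_nhds_zero.pow 2).const_sub 1) (by norm_num)
  norm_num at hlim
  refine hlim.congr' ?_
  filter_upwards [eventually_ne_atTop 0] with x hx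
  exact (coth_eq_one_add_exp_neg_sq_div hx).symm

lemma inv_le_coth {x : ℝ} (hx : 0 < x) : x⁻¹ ≤ coth x := by
  rw [coth, inv_le_iff_one_le_mul₀ hx, div_mul_eq_mul_div, le_div_iff₀ (sinh_pos_iff.mpr hx),
    one_mul, mul_comm]
  exact sinh_le_mul_cosh hx.le

lemma coth_sub_inv_le {x : ℝ} (hx : 0 < x) : coth x - x⁻¹ ≤ x⁻¹ * (cosh x - 1) := by
  have hcosh : cosh x / sinh x ≤ cosh x / x :=
    div_le_div_of_nonneg_left (cosh_pos x).le hx (self_lt_sinh_iff.mpr hx).le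
  rw [coth, mul_sub, mul_one, inv_mul_eq_div]
  linarith

lemma continuousWithinAt_coth_sub_inv :
    ContinuousWithinAt (fun x => coth x - x⁻¹) (Ici 0) 0 := by
  rw [← continuousWithinAt_Ioi_iff_Ici, ContinuousWithinAt]
  have hslope : Tendsto (fun x : ℝ => x⁻¹ * (cosh x - 1)) (𝓝[>] 0) (𝓝 0) := by
    simpa using (hasDerivAt_cosh 0).tendsto_slope_zero_right
  -- the junk values `coth 0 = 1 / 0 = 0` and `0⁻¹ = 0` make the function vanish at `0`
  simp only [coth, sinh_zero, div_zero, inv_zero, sub_zero]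
  exact tendsto_of_tendsto_of_tendsto_of_le_of_le' tendsto_const_nhds hslope
    (eventually_nhdsWithin_of_forall fun x hx => sub_nonneg.mpr (inv_le_coth hx))
    (eventually_nhdsWithin_of_forall fun x hx => coth_sub_inv_le hx)

lemma inv_sinh_sq_le_inv_sq {x : ℝ} (hx : 0 < x) : (sinh x ^ 2)⁻¹ ≤ (x ^ 2)⁻¹ := by
  gcongr
  exact (self_lt_sinh_iff.mpr hx).le

lemma hasDerivAt_coth_sub_inv {x : ℝ} (hx : 0 < x) :
    HasDerivAt (fun y => coth y - y⁻¹) ((x ^ 2)⁻¹ - (sinh x ^ 2)⁻¹) x := by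
  refine ((hasDerivAt_coth hx.ne').sub (hasDerivAt_inv hx.ne')).congr_deriv ?_
  ring

theorem integral_inv_sq_sub_inv_sinh_sq :
    ∫ x in Ioi 0, ((x ^ 2)⁻¹ - (sinh x ^ 2)⁻¹) = 1 := by
  have hlim : Tendsto (fun x => coth x - x⁻¹) atTop (𝓝 (1 - 0)) :=
    tendsto_coth_atTop.sub tendsto_inv_atTop_zero
  rw [integral_Ioi_of_hasDerivAt_of_nonneg continuousWithinAt_coth_sub_inv
    (fun x hx => hasDerivAt_coth_sub_inv hx) (fun x hx => sub_nonneg.mpr (inv_sinh_sq_le_inv_sq hx))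
    hlim]
  simp [coth]

lemma rpow_neg_three_halves {u : ℝ} (hu : 0 ≤ u) : u ^ (-(3 / 2 : ℝ)) = (u * √u)⁻¹ := by
  rw [rpow_neg hu, show (3 / 2 : ℝ) = 1 + 1 / 2 by norm_num, rpow_add' hu (by norm_num),
    rpow_one, sqrt_eq_rpow]

lemma one_sub_exp_neg_mul_mul_rpow_nonneg {u s : ℝ} (hu : 0 ≤ u) (hs : 0 ≤ s) :
    0 ≤ (1 - exp (-(u * s))) * u ^ (-(3 / 2 : ℝ)) :=
  mul_nonneg (sub_nonneg.mpr (exp_le_one_iff.mpr (neg_nonpos.mpr (mul_nonneg hu hs))))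
    (rpow_nonneg hu _)

lemma integral_exp_neg_mul_rpow_neg_half :
    ∫ t in Ioi 0, exp (-t) * t ^ (-(1 / 2 : ℝ)) = √π := by
  rw [← Gamma_one_half_eq, Gamma_eq_integral (by norm_num)]
  norm_num

lemma integrableOn_one_sub_exp_neg_mul_rpow :
    IntegrableOn (fun t => (1 - exp (-t)) * t ^ (-(3 / 2 : ℝ))) (Ioi 0) := by
  have hmeas : AEStronglyMeasurable (fun t : ℝ => (1 - exp (-t)) * t ^ (-(3 / 2 : ℝ))) volume := by
    fun_prop
  have hbound : ∀ t, 0 < t → 0 ≤ 1 - exp (-t) ∧ 1 - exp (-t) ≤ min t 1 := fun t ht =>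
    ⟨by linarith [exp_le_one_iff.mpr (neg_nonpos.mpr ht.le)],
      le_min (by linarith [add_one_le_exp (-t)]) (by linarith [exp_pos (-t)])⟩
  rw [← Ioc_union_Ioi_eq_Ioi zero_le_one]
  refine IntegrableOn.union ?_ ?_
  · refine Integrable.mono' (g := fun t => t ^ (-(1 / 2 : ℝ))) ?_ hmeas.restrict ?_
    · exact (intervalIntegrable_iff_integrableOn_Ioc_of_le zero_le_one).mp
        (intervalIntegral.intervalIntegrable_rpow' (by norm_num))
    · refine (ae_restrict_iff' measurableSet_Ioc).mpr (ae_of_all _ fun t ⟨ht, _⟩ => ?_)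
      obtain ⟨h0, h1⟩ := hbound t ht
      rw [norm_mul, norm_of_nonneg h0, norm_of_nonneg (rpow_nonneg ht.le _)]
      calc (1 - exp (-t)) * t ^ (-(3 / 2 : ℝ)) ≤ t * t ^ (-(3 / 2 : ℝ)) := by
            gcongr; exact h1.trans (min_le_left _ _)
        _ = t ^ (-(1 / 2 : ℝ)) := by
            rw [← rpow_one_add' ht.le (by norm_num)]; norm_num
  · refine Integrable.mono' (integrableOn_Ioi_rpow_of_lt (a := -(3 / 2)) (by norm_num) one_pos)
      hmeas.restrict ((ae_restrict_iff' measurableSet_Ioi).mpr (ae_of_all _ fun t ht => ?_))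
    have ht0 : 0 < t := one_pos.trans ht
    obtain ⟨h0, h1⟩ := hbound t ht0
    rw [norm_mul, norm_of_nonneg h0, norm_of_nonneg (rpow_nonneg ht0.le _)]
    exact mul_le_of_le_one_left (rpow_nonneg ht0.le _) (h1.trans (min_le_right _ _))

lemma integral_one_sub_exp_neg_mul_rpow :
    ∫ t in Ioi 0, (1 - exp (-t)) * t ^ (-(3 / 2 : ℝ)) = 2 * √π := by
  set F : ℝ → ℝ := fun t => 2 * t ^ (-(1 / 2 : ℝ)) * (exp (-t) - 1)
  have hF0 : F 0 = 0 := by simp [F]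
  have hderiv : ∀ t ∈ Ioi (0 : ℝ), HasDerivAt F
      ((1 - exp (-t)) * t ^ (-(3 / 2 : ℝ)) - 2 * (exp (-t) * t ^ (-(1 / 2 : ℝ)))) t := by
    intro t ht
    refine (((hasDerivAt_rpow_const (Or.inl (ne_of_gt ht))).const_mul 2).mul
      ((hasDerivAt_neg t).exp.sub_const 1)).congr_deriv ?_
    norm_num
    ring
  have hcont : ContinuousWithinAt F (Ici 0) 0 := by
    rw [← continuousWithinAt_Ioi_iff_Ici, ContinuousWithinAt, hF0]
    have hsqrt : Tendsto (fun t => 2 * √t) (𝓝[>] 0) (𝓝 0) := by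
      simpa using ((continuous_sqrt.const_mul 2).tendsto 0).mono_left nhdsWithin_le_nhds
    refine squeeze_zero_norm' (eventually_nhdsWithin_of_forall fun t (ht : 0 < t) => ?_) hsqrt
    have h1 : 0 ≤ 1 - exp (-t) := by linarith [exp_le_one_iff.mpr (neg_nonpos.mpr ht.le)]
    have h2 : 1 - exp (-t) ≤ t := by linarith [add_one_le_exp (-t)]
    calc ‖F t‖ = 2 * t ^ (-(1 / 2 : ℝ)) * (1 - exp (-t)) := by
          rw [norm_mul, norm_of_nonneg (by positivity), norm_of_nonpos (by linarith)]; ring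
      _ ≤ 2 * t ^ (-(1 / 2 : ℝ)) * t := by gcongr
      _ = 2 * √t := by
          rw [mul_assoc, ← rpow_add_one ht.ne', sqrt_eq_rpow]; norm_num
  have hlim : Tendsto F atTop (𝓝 (2 * 0 * (0 - 1))) :=
    ((tendsto_rpow_neg_atTop (by norm_num)).const_mul 2).mul
      (tendsto_exp_neg_atTop_nhds_zero.sub_const 1)
  have hint : IntegrableOn (fun t => exp (-t) * t ^ (-(1 / 2 : ℝ))) (Ioi 0) := by
    have := GammaIntegral_convergent (s := 1 / 2) (by norm_num)
    norm_num at this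
    exact this
  have hFTC := integral_Ioi_of_hasDerivAt_of_tendsto hcont hderiv
    (integrableOn_one_sub_exp_neg_mul_rpow.sub (hint.const_mul 2)) hlim
  rw [integral_sub integrableOn_one_sub_exp_neg_mul_rpow (hint.const_mul 2), integral_const_mul,
    integral_exp_neg_mul_rpow_neg_half, hF0] at hFTC
  linarith

theorem integral_one_sub_exp_neg_mul_rpow_eq_sqrt {s : ℝ} (hs : 0 ≤ s) :
    ∫ u in Ioi 0, (1 - exp (-(u * s))) * u ^ (-(3 / 2 : ℝ)) = 2 * √π * √s := by
  obtain rfl | hs := hs.eq_or_lt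
  · simp
  have hscale := integral_comp_mul_right_Ioi (fun t => (1 - exp (-t)) * t ^ (-(3 / 2 : ℝ))) 0 hs
  simp only [zero_mul, integral_one_sub_exp_neg_mul_rpow, smul_eq_mul] at hscale
  have hfactor : ∀ u ∈ Ioi (0 : ℝ), (1 - exp (-(u * s))) * (u * s) ^ (-(3 / 2 : ℝ)) =
      (s * √s)⁻¹ * ((1 - exp (-(u * s))) * u ^ (-(3 / 2 : ℝ))) := fun u hu => by
    rw [mul_rpow (le_of_lt hu) hs.le, rpow_neg_three_halves hs.le]; ring
  rw [setIntegral_congr_fun measurableSet_Ioi hfactor, integral_const_mul] at hscale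
  have : 0 < √s := sqrt_pos.mpr hs
  field_simp at hscale ⊢
  exact hscale

theorem lintegral_one_sub_exp_neg_mul_rpow_eq_sqrt {s : ℝ} (hs : 0 ≤ s) :
    ∫⁻ u in Ioi 0, ENNReal.ofReal ((1 - exp (-(u * s))) * u ^ (-(3 / 2 : ℝ))) =
      ENNReal.ofReal (2 * √π * √s) := by
  obtain rfl | hs := hs.eq_or_lt
  · simp
  rw [← integral_one_sub_exp_neg_mul_rpow_eq_sqrt hs.le, ofReal_integral_eq_lintegral_ofReal]
  · refine Integrable.of_integral_ne_zero ?_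
    rw [integral_one_sub_exp_neg_mul_rpow_eq_sqrt hs.le]
    have := sqrt_pos.mpr hs
    have := sqrt_pos.mpr pi_pos
    positivity
  · exact (ae_restrict_iff' measurableSet_Ioi).mpr
      (ae_of_all _ fun u hu => one_sub_exp_neg_mul_mul_rpow_nonneg (le_of_lt hu) hs.le)

section Laplace

variable {Ω : Type*} [MeasurableSpace Ω] {μ : Measure Ω}

lemma integral_exp_neg_mul_add_of_indepFun {X Y : Ω → ℝ} (hXY : IndepFun X Y μ)
    (hX : AEMeasurable X μ) (hY : AEMeasurable Y μ) (c : ℝ) :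
    ∫ ω, exp (-(c * (X ω + Y ω))) ∂μ =
      (∫ ω, exp (-(c * X ω)) ∂μ) * ∫ ω, exp (-(c * Y ω)) ∂μ := by
  have hexp : Measurable fun x : ℝ => exp (-(c * x)) := by fun_prop
  simp_rw [mul_add, neg_add, exp_add]
  exact (hXY.comp hexp hexp).integral_mul_eq_mul_integral
    (hexp.comp_aemeasurable hX).aestronglyMeasurable
    (hexp.comp_aemeasurable hY).aestronglyMeasurable

variable {S : Ω → ℝ}

lemma integrable_exp_neg_mul [IsFiniteMeasure μ] (hS : AEMeasurable S μ)
    (hS0 : ∀ᵐ ω ∂μ, 0 ≤ S ω) {u : ℝ} (hu : 0 ≤ u) :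
    Integrable (fun ω => exp (-(u * S ω))) μ := by
  refine Integrable.mono' (integrable_const 1) (by fun_prop) ?_
  filter_upwards [hS0] with ω hω
  rw [norm_of_nonneg (exp_pos _).le, exp_le_one_iff, neg_nonpos]
  exact mul_nonneg hu hω

lemma lintegral_sqrt_eq_lintegral_lintegral [SFinite μ] (hS : Measurable S)
    (hS0 : ∀ᵐ ω ∂μ, 0 ≤ S ω) :
    ENNReal.ofReal (2 * √π) * ∫⁻ ω, ENNReal.ofReal (√(S ω)) ∂μ =
      ∫⁻ u in Ioi 0, ∫⁻ ω, ENNReal.ofReal ((1 - exp (-(u * S ω))) * u ^ (-(3 / 2 : ℝ))) ∂μ :=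
  calc ENNReal.ofReal (2 * √π) * ∫⁻ ω, ENNReal.ofReal (√(S ω)) ∂μ
      = ∫⁻ ω, ENNReal.ofReal (2 * √π * √(S ω)) ∂μ := by
        rw [← lintegral_const_mul' _ _ ENNReal.ofReal_ne_top]
        simp_rw [ENNReal.ofReal_mul (by positivity : (0 : ℝ) ≤ 2 * √π)]
    _ = ∫⁻ ω, (∫⁻ u in Ioi 0,
          ENNReal.ofReal ((1 - exp (-(u * S ω))) * u ^ (-(3 / 2 : ℝ)))) ∂μ := by
        refine lintegral_congr_ae ?_
        filter_upwards [hS0] with ω hω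
        exact (lintegral_one_sub_exp_neg_mul_rpow_eq_sqrt hω).symm
    _ = _ := lintegral_lintegral_swap (by fun_prop)

theorem integral_sqrt_eq_integral_one_sub_laplace [IsProbabilityMeasure μ] (hS : Measurable S)
    (hS0 : ∀ᵐ ω ∂μ, 0 ≤ S ω) :
    ∫ ω, √(S ω) ∂μ =
      (2 * √π)⁻¹ * ∫ u in Ioi 0, (1 - ∫ ω, exp (-(u * S ω)) ∂μ) * u ^ (-(3 / 2 : ℝ)) := by
  have hinner : ∀ u ∈ Ioi (0 : ℝ),
      ∫ ω, (1 - exp (-(u * S ω))) * u ^ (-(3 / 2 : ℝ)) ∂μ =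
        (1 - ∫ ω, exp (-(u * S ω)) ∂μ) * u ^ (-(3 / 2 : ℝ)) := fun u hu => by
    rw [integral_mul_const, integral_sub (integrable_const 1)
      (integrable_exp_neg_mul hS.aemeasurable hS0 (le_of_lt hu)), integral_const,
      probReal_univ, one_smul]
  have hinner_nonneg : ∀ u ∈ Ioi (0 : ℝ),
      ∀ᵐ ω ∂μ, 0 ≤ (1 - exp (-(u * S ω))) * u ^ (-(3 / 2 : ℝ)) := fun u hu => by
    filter_upwards [hS0] with ω hω
    exact one_sub_exp_neg_mul_mul_rpow_nonneg (le_of_lt hu) hω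
  have hinner_lintegral : ∀ u ∈ Ioi (0 : ℝ),
      ∫⁻ ω, ENNReal.ofReal ((1 - exp (-(u * S ω))) * u ^ (-(3 / 2 : ℝ))) ∂μ =
        ENNReal.ofReal ((1 - ∫ ω, exp (-(u * S ω)) ∂μ) * u ^ (-(3 / 2 : ℝ))) := fun u hu => by
    rw [← hinner u hu, ofReal_integral_eq_lintegral_ofReal
      (f := fun ω => (1 - exp (-(u * S ω))) * u ^ (-(3 / 2 : ℝ))) (((integrable_const 1).sub
        (integrable_exp_neg_mul hS.aemeasurable hS0 (le_of_lt hu))).mul_const _)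
      (hinner_nonneg u hu)]
  have hlaplace_meas : Measurable fun u => ∫ ω, exp (-(u * S ω)) ∂μ :=
    (StronglyMeasurable.integral_prod_right'
      (f := fun p : ℝ × Ω => exp (-(p.1 * S p.2))) (by fun_prop)).measurable
  have hlaplace_nonneg : ∀ᵐ u ∂(volume.restrict (Ioi (0 : ℝ))),
      0 ≤ (1 - ∫ ω, exp (-(u * S ω)) ∂μ) * u ^ (-(3 / 2 : ℝ)) :=
    (ae_restrict_iff' measurableSet_Ioi).mpr (ae_of_all _ fun u hu =>
      hinner u hu ▸ integral_nonneg_of_ae (hinner_nonneg u hu))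
  rw [integral_eq_lintegral_of_nonneg_ae (ae_of_all _ fun ω => sqrt_nonneg _) (by fun_prop),
    integral_eq_lintegral_of_nonneg_ae hlaplace_nonneg (by fun_prop),
    ← setLIntegral_congr_fun measurableSet_Ioi hinner_lintegral,
    ← lintegral_sqrt_eq_lintegral_lintegral hS hS0, ENNReal.toReal_mul,
    ENNReal.toReal_ofReal (by positivity), inv_mul_cancel_left₀ (by positivity)]

end Laplace

theorem integral_one_sub_sq_div_sinh_mul_rpow :
    ∫ u in Ioi 0, (1 - (√(2 * u) / sinh √(2 * u)) ^ 2) * u ^ (-(3 / 2 : ℝ)) = 2 * √2 := by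
  set G : ℝ → ℝ := fun u => (1 - (√(2 * u) / sinh √(2 * u)) ^ 2) * u ^ (-(3 / 2 : ℝ))
  have hsubst : ∀ x ∈ Ioi (0 : ℝ), (2 * x ^ ((2 : ℝ) - 1)) • G (x ^ (2 : ℝ) * 2⁻¹) =
      4 * √2 * ((x ^ 2)⁻¹ - (sinh x ^ 2)⁻¹) := fun x (hx : 0 < x) => by
    have hs : sinh x ≠ 0 := (sinh_pos_iff.mpr hx).ne'
    have hsqrt2 : √(2 * (x ^ 2 * 2⁻¹)) = x := by
      rw [show 2 * (x ^ 2 * 2⁻¹) = x ^ 2 by ring, sqrt_sq hx.le]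
    have hsqrt : √(x ^ 2 * 2⁻¹) = x / √2 := by
      rw [sqrt_mul (sq_nonneg x), sqrt_sq hx.le, sqrt_inv, div_eq_mul_inv]
    simp only [G, smul_eq_mul]
    rw [rpow_two, show (2 : ℝ) - 1 = 1 by norm_num, rpow_one, hsqrt2,
      rpow_neg_three_halves (by positivity), hsqrt]
    field_simp
    ring
  calc ∫ u in Ioi 0, G u = 2⁻¹ * ∫ y in Ioi 0, G (y * 2⁻¹) := by
        rw [integral_comp_mul_right_Ioi G 0 (by norm_num)]; simp
    _ = 2⁻¹ * ∫ x in Ioi 0, (2 * x ^ ((2 : ℝ) - 1)) • G (x ^ (2 : ℝ) * 2⁻¹) := by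
        rw [integral_comp_rpow_Ioi_of_pos (g := fun y => G (y * 2⁻¹)) two_pos]
    _ = 2⁻¹ * ∫ x in Ioi 0, 4 * √2 * ((x ^ 2)⁻¹ - (sinh x ^ 2)⁻¹) := by
        rw [setIntegral_congr_fun measurableSet_Ioi hsubst]
    _ = 2 * √2 := by
        rw [integral_const_mul, integral_inv_sq_sub_inv_sinh_sq]; ring

/-- If `T₁, T₁'` are independent, each with the Laplace transform
`E[exp(−(λ²/2)T)] = λ/sinh λ` of the hitting time of `1` by a Bessel(3) process started
at `0`, then `E[√(T₁ + T₁')] = √(2/π)`. -/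
theorem expectation_sqrt_sum_bessel_hitting_times
    {Ω : Type*} [MeasureSpace Ω] [IsProbabilityMeasure (ℙ : Measure Ω)]
    (T T' : Ω → ℝ) (hmT : Measurable T) (hmT' : Measurable T')
    (hpos : ∀ᵐ ω, 0 ≤ T ω) (hpos' : ∀ᵐ ω, 0 ≤ T' ω)
    (hindep : IndepFun T T' ℙ)
    (hlap : ∀ lam : ℝ, 0 < lam →
      ∫ ω, Real.exp (-(lam ^ 2 / 2 * T ω)) = lam / Real.sinh lam)
    (hlap' : ∀ lam : ℝ, 0 < lam →
      ∫ ω, Real.exp (-(lam ^ 2 / 2 * T' ω)) = lam / Real.sinh lam) :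
    ∫ ω, Real.sqrt (T ω + T' ω) = Real.sqrt (2 / Real.pi) := by
  have hlaplace_sum : ∀ u ∈ Ioi (0 : ℝ), ∫ ω, exp (-(u * (T ω + T' ω))) =
      (√(2 * u) / sinh √(2 * u)) ^ 2 := fun u (hu : 0 < u) => by
    have hlam : √(2 * u) ^ 2 / 2 = u := by rw [sq_sqrt (by positivity)]; ring
    have hlam_pos : 0 < √(2 * u) := sqrt_pos.mpr (by positivity)
    have hT := hlap _ hlam_pos
    have hT' := hlap' _ hlam_pos
    rw [hlam] at hT hT'
    rw [integral_exp_neg_mul_add_of_indepFun hindep hmT.aemeasurable hmT'.aemeasurable, hT, hT',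
      sq]
  rw [integral_sqrt_eq_integral_one_sub_laplace (S := fun ω => T ω + T' ω) (by fun_prop)
      (by filter_upwards [hpos, hpos'] with ω h h' using add_nonneg h h'),
    setIntegral_congr_fun measurableSet_Ioi fun u hu => by rw [hlaplace_sum u hu],
    integral_one_sub_sq_div_sinh_mul_rpow, sqrt_div' _ pi_pos.le]
  have hsqrt_pi : 0 < √π := sqrt_pos.mpr pi_pos
  field_simp
end

section
/- Let W₁, …, Wₙ be random variables whose joint characteristic function is E[exp(i Σⱼ λⱼ Wⱼ)] = [cosh(Σⱼ λⱼ) + (Σⱼ |λⱼ|)/(Σⱼ λⱼ) · sinh(Σⱼ λⱼ)]^{-1}. Then the vector (W₁−Wₙ, …, W_{n−1}−Wₙ) has the same law as (C⁽¹⁾_e − C⁽ⁿ⁾_e, …, C⁽ⁿ⁻¹⁾_e − C⁽ⁿ⁾_e), where C⁽¹⁾, …, C⁽ⁿ⁾ are independent standard Cauchy processes and e is an independent exponential random variable of parameter 1. In particular, E[exp(i Σ_{j<n} λⱼ(Wⱼ−Wₙ))] = [1 + Σ_{j<n}|λⱼ| + |Σ_{j<n} λⱼ|]^{-1} = ∫₀^∞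 e^{-t} exp(−t Σ_{j<n}|λⱼ| − t|Σ_{j<n} λⱼ|) dt. -/
/-!
The hypothesis determines the characteristic function only off the hyperplane `Σⱼ λⱼ = 0`, and
the differences `Wⱼ - Wₙ` are exactly what is seen on that hyperplane. Perturbing the last
coefficient to `ε - Σ_{j<n} μⱼ` gives `Σ μⱼ (Wⱼ - Wₙ) + ε Wₙ`, whose characteristic function is
`[cosh ε + (Σ|μⱼ| + |ε - Σμⱼ|)/ε · sinh ε]⁻¹`. As `ε → 0` the left side is continuous by
dominated convergence and, since `sinh ε / ε → 1`, the right side tends to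
`[1 + Σ|μⱼ| + |Σμⱼ|]⁻¹`. This is the Laplace transform at rate `Σ|μⱼ| + |Σμⱼ|` of an
exponential time, i.e. the characteristic function of the Cauchy differences at that time.
-/

open MeasureTheory ProbabilityTheory Set
open Filter Topology

theorem Real.tendsto_sinh_div_self : Tendsto (fun x : ℝ => sinh x / x) (𝓝[≠] 0) (𝓝 1) := by
  have h := hasDerivAt_iff_tendsto_slope.mp (hasDerivAt_sinh 0)
  rw [cosh_zero] at h
  refine h.congr fun x => ?_
  simp [slope, div_eq_inv_mul]

theorem tendsto_cosh_add_div_mul_sinh {f : ℝ → ℝ} {a : ℝ} (hf : Tendsto f (𝓝[≠] 0) (𝓝 a)) :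
    Tendsto (fun x => Real.cosh x + f x / x * Real.sinh x) (𝓝[≠] 0) (𝓝 (1 + a)) := by
  have hcosh : Tendsto Real.cosh (𝓝[≠] 0) (𝓝 1) := by
    simpa using Real.continuous_cosh.continuousWithinAt.tendsto (x := 0) (s := {0}ᶜ)
  convert hcosh.add (hf.mul Real.tendsto_sinh_div_self) using 2 with x
  · ring
  · ring

theorem tendsto_inv_cosh_add_abs_sub_div_mul_sinh {c s : ℝ} (hc : 0 ≤ c) :
    Tendsto (fun ε => ((Real.cosh ε + (c + |ε - s|) / ε * Real.sinh ε : ℝ) : ℂ)⁻¹)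
      (𝓝[≠] 0) (𝓝 ((1 + c + |s| : ℝ) : ℂ)⁻¹) := by
  have hf : Tendsto (fun ε : ℝ => c + |ε - s|) (𝓝[≠] 0) (𝓝 (c + |s|)) :=
    ((by fun_prop : Continuous fun ε : ℝ => c + |ε - s|).tendsto' 0 _ (by simp)).mono_left
      nhdsWithin_le_nhds
  rw [add_assoc]
  exact ((Complex.continuous_ofReal.tendsto _).comp (tendsto_cosh_add_div_mul_sinh hf)).inv₀
    (Complex.ofReal_ne_zero.mpr (by positivity))

theorem continuous_integral_cexp_I_mul_add_mul {Ω : Type*} [MeasurableSpace Ω] {P : Measure Ω}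
    [IsFiniteMeasure P] {X Y : Ω → ℝ} (hX : AEMeasurable X P) (hY : AEMeasurable Y P) :
    Continuous fun ε : ℝ => ∫ ω, Complex.exp (Complex.I * ((X ω + ε * Y ω : ℝ) : ℂ)) ∂P := by
  refine continuous_of_dominated (bound := fun _ => 1) (fun ε => ?_) (fun ε => ?_)
    (integrable_const 1) (ae_of_all _ fun ω => by fun_prop)
  · exact (Complex.measurable_exp.comp_aemeasurable (aemeasurable_const.mul
      (Complex.measurable_ofReal.comp_aemeasurable (hX.add (hY.const_mul ε))))).aestronglyMeasurable
  · exact ae_of_all _ fun ω => by rw [mul_comm, Complex.norm_exp_ofReal_mul_I]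

theorem Fin.sum_snoc_sub_sum_mul {R : Type*} [CommRing R] {n : ℕ} (v : Fin n → R) (ε : R)
    (w : Fin (n + 1) → R) :
    ∑ j, (Fin.snoc v (ε - ∑ i, v i) : Fin (n + 1) → R) j * w j =
      ∑ j, v j * (w j.castSucc - w (Fin.last n)) + ε * w (Fin.last n) := by
  rw [Fin.sum_univ_castSucc, Fin.snoc_last]
  simp only [Fin.snoc_castSucc, sub_mul, Finset.sum_mul, mul_sub, Finset.sum_sub_distrib]
  abel

theorem integral_exp_neg_mul_exp_neg_mul_Ioi {a : ℝ} (ha : -1 < a) :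
    ∫ t in Ioi (0 : ℝ), Real.exp (-t) * Real.exp (-(t * a)) = (1 + a)⁻¹ := by
  have h := integral_exp_mul_Ioi (a := -(1 + a)) (by linarith) 0
  rw [mul_zero, Real.exp_zero, neg_div_neg_eq, one_div] at h
  rw [← h]
  refine setIntegral_congr_fun measurableSet_Ioi fun t _ => ?_
  rw [← Real.exp_add]
  ring_nf

/-- If `W₀, …, Wₙ` have joint characteristic function
`[cosh(Σλⱼ) + (Σ|λⱼ|)/(Σλⱼ) sinh(Σλⱼ)]⁻¹`, then the differences `(Wⱼ − Wₙ)_{j<n}` are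
distributed as differences of independent standard Cauchy processes evaluated at an
independent exponential time: their characteristic function is
`[1 + Σ_{j<n}|μⱼ| + |Σ_{j<n}μⱼ|]⁻¹ = ∫₀^∞ e^{−t} e^{−t(Σ|μⱼ| + |Σμⱼ|)} dt`. -/
theorem winding_differences_cauchy
    {Ω : Type*} [MeasureSpace Ω] [IsProbabilityMeasure (ℙ : Measure Ω)]
    (n : ℕ) (W : Fin (n + 1) → Ω → ℝ) (hW : ∀ j, Measurable (W j))
    (hchar : ∀ lam : Fin (n + 1) → ℝ, (∑ j, lam j) ≠ 0 →
      ∫ ω, Complex.exp (Complex.I * ∑ j, (lam j : ℂ) * (W j ω : ℂ)) =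
        (((Real.cosh (∑ j, lam j) +
            (∑ j, |lam j|) / (∑ j, lam j) * Real.sinh (∑ j, lam j) : ℝ) : ℂ))⁻¹) :
    ∀ μ : Fin n → ℝ,
      (∫ ω, Complex.exp (Complex.I *
          ∑ j, (μ j : ℂ) * ((W j.castSucc ω - W (Fin.last n) ω : ℝ) : ℂ)) =
        (((1 + ∑ j, |μ j| + |∑ j, μ j| : ℝ) : ℂ))⁻¹) ∧
      ((1 + ∑ j, |μ j| + |∑ j, μ j| : ℝ)⁻¹ =
        ∫ t in Ioi (0 : ℝ),
          Real.exp (-t) * Real.exp (-(t * (∑ j, |μ j| + |∑ j, μ j|)))) := by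
  intro μ
  set D : Ω → ℝ := fun ω => ∑ j, μ j * (W j.castSucc ω - W (Fin.last n) ω)
  have hD : Measurable D := Finset.measurable_sum _ fun j _ => ((hW _).sub (hW _)).const_mul _
  have hperturbed : ∀ ε ≠ 0,
      ∫ ω, Complex.exp (Complex.I * ((D ω + ε * W (Fin.last n) ω : ℝ) : ℂ)) =
        ((Real.cosh ε + (∑ j, |μ j| + |ε - ∑ j, μ j|) / ε * Real.sinh ε : ℝ) : ℂ)⁻¹ := by
    intro ε hε
    have h := hchar (Fin.snoc μ (ε - ∑ j, μ j)) (by simpa using hε)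
    simp only [Fin.sum_snoc, add_sub_cancel, ← Complex.ofReal_mul, ← Complex.ofReal_sum,
      Fin.sum_snoc_sub_sum_mul] at h
    simpa [D, Fin.sum_univ_castSucc] using h
  have hcont := continuous_integral_cexp_I_mul_add_mul (P := ℙ) hD.aemeasurable
    (hW (Fin.last n)).aemeasurable
  have habs : (0 : ℝ) ≤ ∑ j, |μ j| + |∑ j, μ j| := by positivity
  refine ⟨?_, by rw [add_assoc, integral_exp_neg_mul_exp_neg_mul_Ioi (by linarith)]⟩
  have hlim := tendsto_nhds_unique (l := 𝓝[≠] (0 : ℝ))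
    (((hcont.tendsto 0).mono_left nhdsWithin_le_nhds).congr'
      (eventually_nhdsWithin_of_forall hperturbed))
    (tendsto_inv_cosh_add_abs_sub_div_mul_sinh (by positivity))
  simpa [D] using hlim
end
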